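/- arXiv:1511.06034 — 6 statements merged into one kernel-verified Lean document; each statement's English description precedes it below -/
import Mathlib

section
/- Let r ≥ 2 and m ≥ 1 be integers and let C be the binary code of length (r+1)^m with parity-check matrix H (equivalently, the code equivalent to the direct product of m copies of the [r+1,r] single-parity-check code). Then C is an (n,k,r,t)-exact locally repairable code with t = 2^m - 1: for every subset E ⊆ Z_{r+1}^m with 1 ≤ |E| ≤ 2^m - 1, writing s = |E|, there exists an enumeration α_1, …, α_s of the elements of E and, for each ℓ ∈ {1,…,s}, a set R_ℓ ⊆ (Z_{r+1}^m \ E) ∪ {α_1, …, α_{ℓ-1}} with |R_ℓ| ≤ r and coefficients a_β ∈ F_2 (β ∈ R_ℓ) such that x_{α_ℓ} = ∑_{β ∈ R_ℓ} a_β x_β for every codeword x ∈ C. -/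
/-- `Z_r^m ⊆ Z_{r+1}^m`: the tuples all of whose entries are `< r`;
`Lset r m α` is the set `L(α) = {μ ∈ Z_r^m : μ_j = α_j for all j ∈ T(α)}`,
where `T(α) = {j : α_j ≤ r-1}`. -/
def Lset (r m : ℕ) (α : Fin m → Fin (r + 1)) : Finset (Fin m → Fin (r + 1)) :=
  Finset.univ.filter fun μ =>
    (∀ j, (μ j : ℕ) < r) ∧ ∀ j, (α j : ℕ) < r → μ j = α j

/-- The binary code `C` with parity-check matrix `H`: all vectors
`x ∈ F_2^{Z_{r+1}^m}` with `x_α = ∑_{β ∈ L(α)} x_β` for every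
`α ∈ Z_{r+1}^m \ Z_r^m`. -/
def codeC (r m : ℕ) : Set ((Fin m → Fin (r + 1)) → ZMod 2) :=
  {x | ∀ α : Fin m → Fin (r + 1), ¬(∀ j, (α j : ℕ) < r) →
    x α = ∑ β ∈ Lset r m α, x β}

/-!
Every line `{update α j c : c ∈ Z_{r+1}}` of the grid sums to zero on `C`, so a coordinate
`α ∈ E` is repaired by the other `r` points of a line through it that meets `E` only in `α`.
Such a pair `(α, j)` exists whenever `0 < |E| < 2^m`: if every point of `E` had a second point
of `E` on each of its `m` lines, slicing `E` along one coordinate would give two disjoint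
nonempty slices with the same property in one dimension less, so `|E| ≥ 2^m`.
Removing `α` from `E` and recursing yields the repair order.
-/

open Finset Function

def IsRepairSet {ι F : Type*} [CommSemiring F] (C : Set (ι → F)) (r : ℕ) (i : ι)
    (R : Finset ι) : Prop :=
  i ∉ R ∧ R.card ≤ r ∧ ∃ a : ι → F, ∀ x ∈ C, x i = ∑ j ∈ R, a j * x j

theorem exists_repair_order {ι : Type*} [DecidableEq ι] (Q : ι → Finset ι → Prop) :
    ∀ {n : ℕ} {E : Finset ι}, E.card = n →
      (∀ F ⊆ E, F.Nonempty → ∃ α ∈ F, ∃ R, Disjoint R F ∧ Q α R) →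
      ∃ e : Fin n → ι, Injective e ∧ (∀ ℓ, e ℓ ∈ E) ∧
        ∀ ℓ, ∃ R, (∀ β ∈ R, β ∉ E ∨ ∃ ℓ' < ℓ, e ℓ' = β) ∧ Q (e ℓ) R
  | 0, _, _, _ => ⟨finZeroElim, finZeroElim, finZeroElim, finZeroElim⟩
  | n + 1, E, hE, hpeel => by
    obtain ⟨α, hα, R₀, hR₀, hQ₀⟩ := hpeel E Subset.rfl (card_pos.1 (by omega))
    obtain ⟨e, he, heE, hrep⟩ := exists_repair_order Q (E := E.erase α)
      (by rw [card_erase_of_mem hα, hE])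
      fun F hF => hpeel F (hF.trans (erase_subset α E))
    refine ⟨Fin.cons α e, Fin.cons_injective_iff.2 ⟨?_, he⟩, Fin.cases hα fun ℓ => ?_,
      Fin.cases ⟨R₀, fun β hβ => .inl (disjoint_left.1 hR₀ hβ), hQ₀⟩ fun ℓ => ?_⟩
    · rintro ⟨ℓ, rfl⟩
      exact notMem_erase _ _ (heE ℓ)
    · exact mem_of_mem_erase (heE ℓ)
    · obtain ⟨R, hR, hQ⟩ := hrep ℓ
      refine ⟨R, fun β hβ => ?_, hQ⟩
      rcases hR β hβ with hβE | ⟨ℓ', hℓ', rfl⟩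
      · by_cases hβα : β = α
        · exact .inr ⟨0, Fin.succ_pos ℓ, hβα.symm⟩
        · exact .inl fun hβ => hβE (mem_erase.2 ⟨hβα, hβ⟩)
      · exact .inr ⟨ℓ'.succ, Fin.succ_lt_succ_iff.2 hℓ', Fin.cons_succ _ _ _⟩

section Grid

variable {ι A : Type*} [DecidableEq ι] [DecidableEq A]

theorem two_pow_card_le_card_of_forall_update_mem (D : Finset ι) {S : Finset (ι → A)}
    (hne : S.Nonempty) (hS : ∀ a ∈ S, ∀ j ∈ D, ∃ c ≠ a j, update a j c ∈ S) :
    2 ^ D.card ≤ S.card := by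
  induction D using Finset.induction_on generalizing S with
  | empty => exact card_pos.2 hne
  | insert j D hj ih =>
    classical
    obtain ⟨a, ha⟩ := hne
    obtain ⟨c, hc, hac⟩ := hS a ha j (mem_insert_self j D)
    have hslice : ∀ v, (S.filter (· j = v)).Nonempty →
        2 ^ D.card ≤ (S.filter (· j = v)).card := fun v hv => ih hv fun b hb k hk => by
      obtain ⟨hbS, hbj⟩ := mem_filter.1 hb
      obtain ⟨c', hc', hmem⟩ := hS b hbS k (mem_insert_of_mem hk)
      have hjk : j ≠ k := fun h => hj (h ▸ hk)
      exact ⟨c', hc', mem_filter.2 ⟨hmem, by rwa [update_of_ne hjk]⟩⟩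
    have hdisj : Disjoint (S.filter (· j = a j)) (S.filter (· j = c)) :=
      disjoint_filter.2 fun b _ h1 h2 => hc (h2.symm.trans h1)
    calc 2 ^ (insert j D).card = 2 ^ D.card + 2 ^ D.card := by
          rw [card_insert_of_notMem hj, pow_succ, mul_two]
      _ ≤ (S.filter (· j = a j)).card + (S.filter (· j = c)).card :=
          add_le_add (hslice _ ⟨a, mem_filter.2 ⟨ha, rfl⟩⟩)
            (hslice _ ⟨_, mem_filter.2 ⟨hac, update_self j c a⟩⟩)
      _ = (S.filter (· j = a j) ∪ S.filter (· j = c)).card :=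
          (card_union_of_disjoint hdisj).symm
      _ ≤ S.card := card_le_card (union_subset (filter_subset _ _) (filter_subset _ _))

theorem exists_forall_update_notMem [Fintype ι] {S : Finset (ι → A)} (hS : S.Nonempty)
    (hcard : S.card < 2 ^ Fintype.card ι) :
    ∃ a ∈ S, ∃ j, ∀ c ≠ a j, update a j c ∉ S := by
  by_contra! h
  exact hcard.not_ge
    (two_pow_card_le_card_of_forall_update_mem univ hS fun a ha j _ => h a ha j)

theorem disjoint_image_update_erase [Fintype ι] [Fintype A] {S : Finset (ι → A)} {a : ι → A}
    {j : ι} (h : ∀ c ≠ a j, update a j c ∉ S) :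
    Disjoint ((univ.image (update a j)).erase a) S := by
  refine disjoint_left.2 fun b hb => ?_
  obtain ⟨hba, c, -, rfl⟩ := mem_erase.1 hb |>.imp_right mem_image.1
  exact h c fun hc => hba (hc ▸ update_eq_self j a)

end Grid

namespace codeC

variable {r m : ℕ}

theorem Lset_eq_singleton {γ : Fin m → Fin (r + 1)} (hγ : ∀ j, (γ j : ℕ) < r) :
    Lset r m γ = {γ} := by
  ext μ
  simp only [Lset, mem_filter, mem_univ, true_and, mem_singleton]
  exact ⟨fun h => funext fun j => h.2 j (hγ j), by rintro rfl; exact ⟨hγ, fun _ _ => rfl⟩⟩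

theorem eq_sum_Lset {x : (Fin m → Fin (r + 1)) → ZMod 2} (hx : x ∈ codeC r m)
    (γ : Fin m → Fin (r + 1)) : x γ = ∑ β ∈ Lset r m γ, x β := by
  by_cases hγ : ∀ j, (γ j : ℕ) < r
  · rw [Lset_eq_singleton hγ, sum_singleton]
  · exact hx γ hγ

theorem Lset_update_castSucc {γ : Fin m → Fin (r + 1)} {j : Fin m} (hγ : γ j = Fin.last r)
    (c : Fin r) :
    Lset r m (update γ j c.castSucc) = (Lset r m γ).filter (· j = c.castSucc) := by
  ext μ
  simp only [Lset, mem_filter, mem_univ, true_and]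
  constructor
  · rintro ⟨hμ, h⟩
    refine ⟨⟨hμ, fun k hk => ?_⟩, by simpa using h j (by simp)⟩
    have hkj : k ≠ j := by
      rintro rfl
      simp [hγ] at hk
    simpa [update_of_ne hkj] using h k (by rwa [update_of_ne hkj])
  · rintro ⟨⟨hμ, h⟩, hμj⟩
    refine ⟨hμ, fun k hk => ?_⟩
    rcases eq_or_ne k j with rfl | hkj
    · rwa [update_self]
    · rw [update_of_ne hkj] at hk ⊢
      exact h k hk

theorem sum_update_eq_zero {x : (Fin m → Fin (r + 1)) → ZMod 2} (hx : x ∈ codeC r m)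
    (α : Fin m → Fin (r + 1)) (j : Fin m) : ∑ c, x (update α j c) = 0 := by
  set γ := update α j (Fin.last r)
  -- `L(γ)` splits according to the `j`-th entry, which is never `r` there.
  have hlast : x γ = ∑ c : Fin r, x (update α j c.castSucc) := calc
    x γ = ∑ c, ∑ μ ∈ (Lset r m γ).filter (· j = c), x μ := by
      rw [sum_fiberwise, ← eq_sum_Lset hx]
    _ = ∑ c : Fin r, ∑ μ ∈ (Lset r m γ).filter (· j = c.castSucc), x μ := by
      rw [Fin.sum_univ_castSucc, add_eq_left]
      refine sum_eq_zero fun μ hμ => absurd (mem_filter.1 hμ) fun ⟨hμL, hμj⟩ => ?_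
      have := (mem_filter.1 hμL).2.1 j
      simp [hμj] at this
    _ = ∑ c : Fin r, x (update α j c.castSucc) := sum_congr rfl fun c _ => by
      rw [← Lset_update_castSucc (update_self j _ α), update_idem, ← eq_sum_Lset hx]
  rw [Fin.sum_univ_castSucc, ← hlast, CharTwo.add_self_eq_zero]

theorem isRepairSet_image_update_erase (α : Fin m → Fin (r + 1)) (j : Fin m) :
    IsRepairSet (codeC r m) r α ((univ.image (update α j)).erase α) := by
  have hα : α ∈ univ.image (update α j) :=
    mem_image.2 ⟨α j, mem_univ _, update_eq_self j α⟩
  refine ⟨notMem_erase α _, ?_, 1, fun x hx => ?_⟩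
  · rw [card_erase_of_mem hα, card_image_of_injective _ (update_injective α j), card_univ,
      Fintype.card_fin, Nat.add_sub_cancel]
  · have hline := sum_update_eq_zero hx α j
    rw [← sum_image fun a _ b _ h => update_injective α j h, ← add_sum_erase _ _ hα,
      add_eq_zero_iff_eq_neg, CharTwo.neg_eq] at hline
    simpa only [Pi.one_apply, one_mul] using hline

end codeC

theorem codeC_is_ELRC_general (r m : ℕ)
    (E : Finset (Fin m → Fin (r + 1))) (h2 : E.card ≤ 2 ^ m - 1) :
    ∃ e : Fin E.card → (Fin m → Fin (r + 1)),
      Function.Injective e ∧ (∀ ℓ, e ℓ ∈ E) ∧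
      ∀ ℓ : Fin E.card, ∃ R : Finset (Fin m → Fin (r + 1)),
        (∀ β ∈ R, β ∉ E ∨ ∃ ℓ' : Fin E.card, ℓ' < ℓ ∧ e ℓ' = β) ∧
        e ℓ ∉ R ∧ R.card ≤ r ∧
        ∃ a : (Fin m → Fin (r + 1)) → ZMod 2,
          ∀ x ∈ codeC r m, x (e ℓ) = ∑ β ∈ R, a β * x β := by
  refine exists_repair_order (IsRepairSet (codeC r m) r) rfl fun F hF hFne => ?_
  have hcard : F.card < 2 ^ Fintype.card (Fin m) := by
    have := card_le_card hF
    have := Nat.one_le_two_pow (n := m)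
    rw [Fintype.card_fin]
    omega
  obtain ⟨α, hα, j, hj⟩ := exists_forall_update_notMem hFne hcard
  exact ⟨α, hα, _, disjoint_image_update_erase hj,
    codeC.isRepairSet_image_update_erase α j⟩

/-- The code `C` is an `(n, k, r, t)`-ELRC with `t = 2^m - 1`: every erasure
pattern `E` with `1 ≤ |E| ≤ 2^m - 1` can be sequentially repaired, each lost
symbol from at most `r` symbols that are live or already repaired. -/
theorem codeC_is_ELRC (r m : ℕ) (hr : 2 ≤ r) (hm : 1 ≤ m)
    (E : Finset (Fin m → Fin (r + 1))) (h1 : 1 ≤ E.card) (h2 : E.card ≤ 2 ^ m - 1) :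
    ∃ e : Fin E.card → (Fin m → Fin (r + 1)),
      Function.Injective e ∧ (∀ ℓ, e ℓ ∈ E) ∧
      ∀ ℓ : Fin E.card, ∃ R : Finset (Fin m → Fin (r + 1)),
        (∀ β ∈ R, β ∉ E ∨ ∃ ℓ' : Fin E.card, ℓ' < ℓ ∧ e ℓ' = β) ∧
        e ℓ ∉ R ∧ R.card ≤ r ∧
        ∃ a : (Fin m → Fin (r + 1)) → ZMod 2,
          ∀ x ∈ codeC r m, x (e ℓ) = ∑ β ∈ R, a β * x β :=
  codeC_is_ELRC_general r m E h2
end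

section
/- Let r ≥ 2 and m ≥ 1 be integers and let C be the binary code of length (r+1)^m defined by the parity-check matrix H. For every subset E ⊆ Z_{r+1}^m with 1 ≤ |E| ≤ 2^m - 1, there exist an element α ∈ E and a set R ⊆ Z_{r+1}^m \ E with |R| ≤ r such that x_α = ∑_{β ∈ R} x_β for every codeword x ∈ C. -/
/-!
Splitting the parity check at a point with `j`-th entry `r` according to the value of the `j`-th
entry shows that every codeword sums to zero along each axis-parallel line of `Z_{r+1}^m`. If every
point of `E` had a second point of `E` on each of the `m` lines through it, then `|E| ≥ 2^m` by
induction on `m`: projecting away the last coordinate, every fibre contains two points of `E` and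
the image has the same property.
Hence some `α ∈ E` lies on a line meeting `E` only in `α`, and the other `r` points of that line
form a repair set for `α`.
-/

open Function Finset

def puncturedLine {σ : Type*} [Fintype σ] [DecidableEq σ] {m : ℕ} (α : Fin m → σ) (j : Fin m) :
    Finset (Fin m → σ) :=
  (univ.erase (α j)).image (update α j)

section puncturedLine

variable {σ : Type*} [Fintype σ] [DecidableEq σ] {m : ℕ} (α : Fin m → σ) (j : Fin m)

lemma mem_puncturedLine {β : Fin m → σ} :
    β ∈ puncturedLine α j ↔ ∃ t ≠ α j, update α j t = β := by
  simp [puncturedLine]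

lemma self_notMem_puncturedLine : α ∉ puncturedLine α j := by
  simp [mem_puncturedLine]

lemma card_puncturedLine : #(puncturedLine α j) = Fintype.card σ - 1 := by
  rw [puncturedLine, card_image_of_injective _ (update_injective α j),
    card_erase_of_mem (mem_univ _), card_univ]

lemma sum_puncturedLine {M : Type*} [AddCommMonoid M] (f : (Fin m → σ) → M) :
    ∑ β ∈ puncturedLine α j, f β = ∑ t ∈ univ.erase (α j), f (update α j t) :=
  sum_image fun _ _ _ _ h => update_injective α j h

end puncturedLine

theorem two_pow_le_card_of_forall_exists_update_mem {σ : Type*} [DecidableEq σ] :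
    ∀ {m : ℕ} {E : Finset (Fin m → σ)}, E.Nonempty →
      (∀ α ∈ E, ∀ j, ∃ t ≠ α j, update α j t ∈ E) → 2 ^ m ≤ #E
  | 0, _, hne, _ => by simpa using hne.card_pos
  | m + 1, E, hne, hE => by
    have hfiber : ∀ b ∈ E.image Fin.init, 2 ≤ #{α ∈ E | Fin.init α = b} := by
      intro b hb
      obtain ⟨α, hα, rfl⟩ := mem_image.mp hb
      obtain ⟨t, ht, htE⟩ := hE α hα (Fin.last m)
      refine one_lt_card.mpr ⟨α, by simp [hα], update α (Fin.last m) t,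
        by simp [htE, Fin.init_update_last], fun h => ht ?_⟩
      simpa using (congrFun h (Fin.last m)).symm
    have hproj : ∀ α ∈ E.image Fin.init, ∀ j, ∃ t ≠ α j, update α j t ∈ E.image Fin.init := by
      intro b hb j
      obtain ⟨α, hα, rfl⟩ := mem_image.mp hb
      obtain ⟨t, ht, htE⟩ := hE α hα j.castSucc
      exact ⟨t, ht, mem_image.mpr ⟨_, htE, Fin.init_update_castSucc α j t⟩⟩
    calc 2 ^ (m + 1) = 2 ^ m * 2 := pow_succ 2 m
      _ ≤ #(E.image Fin.init) * 2 :=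
        Nat.mul_le_mul_right 2 (two_pow_le_card_of_forall_exists_update_mem (hne.image _) hproj)
      _ ≤ #E := by
        rw [card_eq_sum_card_image Fin.init E]
        simpa using card_nsmul_le_sum _ _ 2 hfiber

section codeC

variable {r m : ℕ}

lemma Lset_eq_singleton {β : Fin m → Fin (r + 1)} (hβ : ∀ j, (β j : ℕ) < r) :
    Lset r m β = {β} := by
  ext μ
  simp only [Lset, mem_filter, mem_univ, true_and, mem_singleton]
  exact ⟨fun h => funext fun j => h.2 j (hβ j), by rintro rfl; exact ⟨hβ, fun _ _ => rfl⟩⟩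

lemma apply_eq_sum_Lset_of_mem_codeC {x : (Fin m → Fin (r + 1)) → ZMod 2} (hx : x ∈ codeC r m)
    (β : Fin m → Fin (r + 1)) : x β = ∑ γ ∈ Lset r m β, x γ := by
  by_cases hβ : ∀ j, (β j : ℕ) < r
  · rw [Lset_eq_singleton hβ, sum_singleton]
  · exact hx β hβ

lemma mem_Lset_update_castSucc_iff (α : Fin m → Fin (r + 1)) (j : Fin m) (t : Fin r)
    (μ : Fin m → Fin (r + 1)) :
    μ ∈ Lset r m (update α j t.castSucc) ↔
      μ ∈ Lset r m (update α j (Fin.last r)) ∧ μ j = t.castSucc := by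
  simp only [Lset, mem_filter, mem_univ, true_and, update_apply]
  constructor
  · rintro ⟨hμ, h⟩
    exact ⟨⟨hμ, by grind⟩, by simpa using h j (by simp)⟩
  · grind

lemma Lset_update_last_eq_biUnion (α : Fin m → Fin (r + 1)) (j : Fin m) :
    Lset r m (update α j (Fin.last r)) =
      univ.biUnion fun t : Fin r => Lset r m (update α j t.castSucc) := by
  ext μ
  simp only [mem_biUnion, mem_univ, true_and, mem_Lset_update_castSucc_iff]
  refine ⟨fun h => ⟨⟨μ j, (mem_filter.mp h).2.1 j⟩, h, rfl⟩, fun ⟨_, h, _⟩ => h⟩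

lemma sum_update_eq_zero_of_mem_codeC {x : (Fin m → Fin (r + 1)) → ZMod 2}
    (hx : x ∈ codeC r m) (α : Fin m → Fin (r + 1)) (j : Fin m) :
    ∑ t, x (update α j t) = 0 := by
  have hlast : x (update α j (Fin.last r)) = ∑ t : Fin r, x (update α j t.castSucc) := by
    rw [apply_eq_sum_Lset_of_mem_codeC hx, Lset_update_last_eq_biUnion, sum_biUnion]
    · exact sum_congr rfl fun t _ => (apply_eq_sum_Lset_of_mem_codeC hx _).symm
    · intro t₁ _ t₂ _ hne
      refine disjoint_left.mpr fun μ h₁ h₂ => hne (Fin.castSucc_injective r ?_)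
      rw [← ((mem_Lset_update_castSucc_iff α j t₁ μ).mp h₁).2,
        ((mem_Lset_update_castSucc_iff α j t₂ μ).mp h₂).2]
  rw [Fin.sum_univ_castSucc, hlast, CharTwo.add_self_eq_zero]

lemma apply_eq_sum_puncturedLine_of_mem_codeC {x : (Fin m → Fin (r + 1)) → ZMod 2}
    (hx : x ∈ codeC r m) (α : Fin m → Fin (r + 1)) (j : Fin m) :
    x α = ∑ β ∈ puncturedLine α j, x β := by
  have h := sum_update_eq_zero_of_mem_codeC hx α j
  rw [← add_sum_erase _ _ (mem_univ (α j)), update_eq_self] at h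
  rwa [sum_puncturedLine, ← CharTwo.add_eq_zero]

end codeC

theorem exists_repairable_symbol_general (r m : ℕ)
    (E : Finset (Fin m → Fin (r + 1))) (h1 : 1 ≤ E.card) (h2 : E.card ≤ 2 ^ m - 1) :
    ∃ α ∈ E, ∃ R : Finset (Fin m → Fin (r + 1)),
      (∀ β ∈ R, β ∉ E) ∧ α ∉ R ∧ R.card ≤ r ∧
      ∀ x ∈ codeC r m, x α = ∑ β ∈ R, x β := by
  obtain ⟨α, hα, j, hj⟩ : ∃ α ∈ E, ∃ j, ∀ t ≠ α j, update α j t ∉ E := by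
    by_contra! h
    have := two_pow_le_card_of_forall_exists_update_mem (card_pos.mp h1) h
    omega
  refine ⟨α, hα, puncturedLine α j, ?_, self_notMem_puncturedLine α j, ?_,
    fun x hx => apply_eq_sum_puncturedLine_of_mem_codeC hx α j⟩
  · intro β hβ
    obtain ⟨t, ht, rfl⟩ := (mem_puncturedLine α j).mp hβ
    exact hj t ht
  · simp [card_puncturedLine]

/-- For every erasure pattern `E` with `1 ≤ |E| ≤ 2^m - 1` there is a symbol
`α ∈ E` with a repair set `R` of size at most `r` disjoint from `E`. -/
theorem exists_repairable_symbol (r m : ℕ) (hr : 2 ≤ r) (hm : 1 ≤ m)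
    (E : Finset (Fin m → Fin (r + 1))) (h1 : 1 ≤ E.card) (h2 : E.card ≤ 2 ^ m - 1) :
    ∃ α ∈ E, ∃ R : Finset (Fin m → Fin (r + 1)),
      (∀ β ∈ R, β ∉ E) ∧ α ∉ R ∧ R.card ≤ r ∧
      ∀ x ∈ codeC r m, x α = ∑ β ∈ R, x β :=
  exists_repairable_symbol_general r m E h1 h2
end

section
/- Let r ≥ 2 and m ≥ 1 be integers. For every subset E ⊆ Z_{r+1}^m with 1 ≤ |E| ≤ 2^m - 1, there exist an index i ∈ {1,…,m} and an element α ∈ E such that every β ∈ Z_{r+1}^m with β ≠ α and β_j = α_j for all j ≠ i satisfies β ∉ E (that is, the axis-parallel line through α in direction i meets E only in α). -/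
/-!
Suppose every axis-parallel line through a point of `E` meets `E` in a second point. Slicing `E`
by the value of the first coordinate, each nonempty slice inherits this property in one dimension
fewer, and the line in the first direction through any point of `E` shows that at least two slices
are nonempty. By induction on the dimension `|E| ≥ 2 ^ m`.
-/

variable {α : Type*}

def HasSecondPointOnEveryLine {m : ℕ} (E : Finset (Fin m → α)) : Prop :=
  ∀ x ∈ E, ∀ i, ∃ y ∈ E, y ≠ x ∧ ∀ j, j ≠ i → y j = x j

lemma eq_of_apply_zero_eq_of_tail_eq {m : ℕ} {x y : Fin (m + 1) → α} (h0 : x 0 = y 0)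
    (ht : Fin.tail x = Fin.tail y) : x = y := by
  rw [← Fin.cons_self_tail x, ← Fin.cons_self_tail y, h0, ht]

lemma HasSecondPointOnEveryLine.exists_apply_zero_ne {m : ℕ} {E : Finset (Fin (m + 1) → α)}
    (hE : HasSecondPointOnEveryLine E) {x : Fin (m + 1) → α} (hx : x ∈ E) : ∃ y ∈ E, y 0 ≠ x 0 := by
  obtain ⟨y, hyE, hyx, hy⟩ := hE x hx 0
  refine ⟨y, hyE, fun h0 => hyx (eq_of_apply_zero_eq_of_tail_eq h0 ?_)⟩
  exact funext fun j => hy j.succ (Fin.succ_ne_zero j)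

section Slice

variable [DecidableEq α] {m : ℕ}

def sliceAtZero (E : Finset (Fin (m + 1) → α)) (c : α) : Finset (Fin m → α) :=
  (E.filter (· 0 = c)).image Fin.tail

lemma card_sliceAtZero (E : Finset (Fin (m + 1) → α)) (c : α) :
    (sliceAtZero E c).card = (E.filter (· 0 = c)).card := by
  refine Finset.card_image_of_injOn fun x hx y hy hxy => ?_
  simp only [Finset.mem_coe, Finset.mem_filter] at hx hy
  exact eq_of_apply_zero_eq_of_tail_eq (hx.2.trans hy.2.symm) hxy

lemma HasSecondPointOnEveryLine.sliceAtZero {E : Finset (Fin (m + 1) → α)}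
    (hE : HasSecondPointOnEveryLine E) (c : α) : HasSecondPointOnEveryLine (sliceAtZero E c) := by
  intro x' hx' i
  obtain ⟨x, hx, rfl⟩ := Finset.mem_image.mp hx'
  rw [Finset.mem_filter] at hx
  obtain ⟨y, hyE, hyx, hy⟩ := hE x hx.1 i.succ
  have hy0 : y 0 = c := (hy 0 (Fin.succ_ne_zero i).symm).trans hx.2
  refine ⟨Fin.tail y, Finset.mem_image_of_mem _ (Finset.mem_filter.mpr ⟨hyE, hy0⟩), ?_, ?_⟩
  · exact fun h => hyx (eq_of_apply_zero_eq_of_tail_eq (hy0.trans hx.2.symm) h)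
  · exact fun j hj => hy j.succ (Fin.succ_injective _ |>.ne hj)

end Slice

theorem HasSecondPointOnEveryLine.two_pow_le_card [DecidableEq α] :
    ∀ {m : ℕ} {E : Finset (Fin m → α)}, HasSecondPointOnEveryLine E → E.Nonempty →
      2 ^ m ≤ E.card
  | 0, _, _, hne => by simpa using hne.card_pos
  | m + 1, E, hE, ⟨x, hx⟩ => by
    have slice_ge (c : α) (hc : (E.filter (· 0 = c)).Nonempty) :
        2 ^ m ≤ (E.filter (· 0 = c)).card :=
      card_sliceAtZero E c ▸ (hE.sliceAtZero c).two_pow_le_card (hc.image _)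
    obtain ⟨y, hy, hyx⟩ := hE.exists_apply_zero_ne hx
    have hx_slice : 2 ^ m ≤ (E.filter (· 0 = x 0)).card :=
      slice_ge _ ⟨x, Finset.mem_filter.mpr ⟨hx, rfl⟩⟩
    have hy_slice : 2 ^ m ≤ (E.filter (¬· 0 = x 0)).card :=
      (slice_ge _ ⟨y, Finset.mem_filter.mpr ⟨hy, rfl⟩⟩).trans <| Finset.card_le_card <|
        Finset.monotone_filter_right E fun _ _ hz => ne_of_eq_of_ne hz hyx
    have := Finset.card_filter_add_card_filter_not (s := E) (· 0 = x 0)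
    rw [pow_succ]
    omega

theorem exists_line_meeting_only_once_general (r m : ℕ)
    (E : Finset (Fin m → Fin (r + 1))) (h1 : 1 ≤ E.card) (h2 : E.card ≤ 2 ^ m - 1) :
    ∃ i : Fin m, ∃ α ∈ E, ∀ β : Fin m → Fin (r + 1),
      β ≠ α → (∀ j, j ≠ i → β j = α j) → β ∉ E := by
  by_contra hcon
  have hE : HasSecondPointOnEveryLine E := fun x hx i => by
    push Not at hcon
    obtain ⟨y, hyx, hy, hyE⟩ := hcon i x hx
    exact ⟨y, hyE, hyx, hy⟩
  have := hE.two_pow_le_card (Finset.card_pos.mp h1)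
  have := Nat.one_le_two_pow (n := m)
  omega

/-- For every nonempty `E ⊆ Z_{r+1}^m` with `|E| ≤ 2^m - 1` there are a
direction `i` and a point `α ∈ E` such that the axis-parallel line through `α`
in direction `i` meets `E` only in `α`. -/
theorem exists_line_meeting_only_once (r m : ℕ) (hr : 2 ≤ r) (hm : 1 ≤ m)
    (E : Finset (Fin m → Fin (r + 1))) (h1 : 1 ≤ E.card) (h2 : E.card ≤ 2 ^ m - 1) :
    ∃ i : Fin m, ∃ α ∈ E, ∀ β : Fin m → Fin (r + 1),
      β ≠ α → (∀ j, j ≠ i → β j = α j) → β ∉ E :=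
  exists_line_meeting_only_once_general r m E h1 h2
end

section
/- Let r ≥ 2 and m ≥ 1 be integers and let C be the binary code of length (r+1)^m defined by the parity-check matrix H. Then the F_2-linear restriction map C → F_2^{Z_r^m} sending a codeword x = (x_β)_{β ∈ Z_{r+1}^m} to its restriction (x_β)_{β ∈ Z_r^m} is a bijection; consequently Z_r^m is an information set of C and C is an [n,k] linear code with n = (r+1)^m and k = r^m. -/
section SumCheckCode

variable {ι R : Type*} [AddCommMonoid R]

def sumCheckCode (S : Set ι) (L : ι → Finset ι) : Set (ι → R) :=
  {x | ∀ α, α ∉ S → x α = ∑ β ∈ L α, x β}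

variable {S : Set ι} {L : ι → Finset ι}

noncomputable def sumCheckExtend (L : ι → Finset ι) (y : S → R) : ι → R :=
  Function.extend Subtype.val y fun α => ∑ β ∈ L α, Function.extend Subtype.val y 0 β

theorem sumCheckExtend_val (y : S → R) (s : S) : sumCheckExtend L y s = y s :=
  Subtype.val_injective.extend_apply _ _ _

variable (hL : ∀ α, ∀ β ∈ L α, β ∈ S)
include hL

theorem sum_eq_sum_of_eqOn {x x' : ι → R} (h : Set.EqOn x x' S) (α : ι) :
    ∑ β ∈ L α, x β = ∑ β ∈ L α, x' β :=
  Finset.sum_congr rfl fun β hβ => h (hL α β hβ)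

theorem sumCheckExtend_mem (y : S → R) : sumCheckExtend L y ∈ sumCheckCode S L := by
  intro α hα
  have hα' : ¬∃ s : S, (s : ι) = α := fun ⟨s, hs⟩ => hα (hs ▸ s.2)
  refine (Function.extend_apply' _ _ _ hα').trans (sum_eq_sum_of_eqOn hL (fun s hs => ?_) α)
  exact (Subtype.val_injective.extend_apply y 0 ⟨s, hs⟩).trans (sumCheckExtend_val y ⟨s, hs⟩).symm

theorem eq_of_eqOn {x x' : ι → R} (hx : x ∈ sumCheckCode S L) (hx' : x' ∈ sumCheckCode S L)
    (h : Set.EqOn x x' S) : x = x' := by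
  funext α
  by_cases hα : α ∈ S
  · exact h hα
  · rw [hx α hα, hx' α hα, sum_eq_sum_of_eqOn hL h]

noncomputable def sumCheckRestrictEquiv : sumCheckCode (R := R) S L ≃ (S → R) where
  toFun x s := x.1 s
  invFun y := ⟨sumCheckExtend L y, sumCheckExtend_mem hL y⟩
  left_inv x := Subtype.ext <| eq_of_eqOn hL (sumCheckExtend_mem hL _) x.2 fun s hs =>
    sumCheckExtend_val _ ⟨s, hs⟩
  right_inv y := funext (sumCheckExtend_val y)

end SumCheckCode

theorem lt_of_mem_Lset {r m : ℕ} {α β : Fin m → Fin (r + 1)} (hβ : β ∈ Lset r m α) :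
    ∀ j, (β j : ℕ) < r :=
  (Finset.mem_filter.1 hβ).2.1

theorem card_fin_succ_val_lt (r : ℕ) : Nat.card {b : Fin (r + 1) // (b : ℕ) < r} = r := by
  rw [Nat.card_eq_fintype_card, Fintype.card_subtype, Fin.card_filter_val_lt]
  omega

theorem card_tuples_val_lt (r m : ℕ) :
    Nat.card {μ : Fin m → Fin (r + 1) // ∀ j, (μ j : ℕ) < r} = r ^ m := by
  rw [Nat.card_congr (Equiv.subtypePiEquivPi (α := Fin m) (β := fun _ => Fin (r + 1))
    (p := fun _ b => (b : ℕ) < r)), Nat.card_fun, card_fin_succ_val_lt, Nat.card_fin]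

theorem restriction_bijective_general (r m : ℕ) :
    Function.Bijective
      (fun x : codeC r m =>
        fun μ : {μ : Fin m → Fin (r + 1) // ∀ j, (μ j : ℕ) < r} =>
          (x : (Fin m → Fin (r + 1)) → ZMod 2) μ.val) ∧
    Nat.card (codeC r m) = 2 ^ (r ^ m) := by
  let e : codeC r m ≃ ({μ : Fin m → Fin (r + 1) | ∀ j, (μ j : ℕ) < r} → ZMod 2) :=
    sumCheckRestrictEquiv (L := Lset r m) fun _ _ => lt_of_mem_Lset
  refine ⟨e.bijective, ?_⟩
  rw [Nat.card_congr e, Nat.card_fun, Nat.card_zmod]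
  exact congrArg (2 ^ ·) (card_tuples_val_lt r m)

/-- The restriction map `C → F_2^{Z_r^m}` is a bijection; consequently
`Z_r^m` is an information set of `C`, and `C`, a binary code of length
`(r+1)^m`, has dimension `k = r^m`, i.e. `|C| = 2^(r^m)`. -/
theorem restriction_bijective (r m : ℕ) (hr : 2 ≤ r) (hm : 1 ≤ m) :
    Function.Bijective
      (fun x : codeC r m =>
        fun μ : {μ : Fin m → Fin (r + 1) // ∀ j, (μ j : ℕ) < r} =>
          (x : (Fin m → Fin (r + 1)) → ZMod 2) μ.val) ∧
    Nat.card (codeC r m) = 2 ^ (r ^ m) :=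
  restriction_bijective_general r m
end

section
/- For all integers r ≥ 2 and m ≥ 2, the rate of the constructed code strictly exceeds the rate bound r/(r+t) for codes with all-symbol locality (r,t+1) and for codes with (r,t)-cooperative locality at erasure tolerance t = 2^m - 1: that is, r^m / (r+1)^m > r / (r + 2^m - 1), equivalently r^m · (r + 2^m - 1) > r · (r+1)^m. -/
/-! Dividing by `r`, the integer inequality reads `(r+1)^m < r^m + (2^m - 1) r^(m-1)`. In the
binomial expansion of `(r+1)^m` every term after `r^m` is `C(m,k) r^(m-k) ≤ C(m,k) r^(m-1)`, and
these binomial coefficients sum to `2^m - 1`; the bound is strict once a term with `k ≥ 2` occurs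
and `r > 1`. Inductively, multiplying the bound for `n` by `x + 1` loses exactly
`(2^n - 1) x^n (x - 1)`. -/

section
variable {R : Type*} [CommRing R] [LinearOrder R] [IsStrictOrderedRing R] {x : R}

theorem mul_add_one_pow_succ_add_le_of_le (hx : 1 ≤ x) {n : ℕ}
    (h : x * (x + 1) ^ n + x ^ n ≤ x ^ n * (x + 2 ^ n)) :
    x * (x + 1) ^ (n + 1) + x ^ (n + 1) + (2 ^ n - 1) * x ^ n * (x - 1) ≤
      x ^ (n + 1) * (x + 2 ^ (n + 1)) := by
  have := mul_le_mul_of_nonneg_left h (by linarith : 0 ≤ x + 1)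
  rw [pow_succ, pow_succ, pow_succ]
  linarith

theorem mul_add_one_pow_add_pow_le (hx : 1 ≤ x) (n : ℕ) :
    x * (x + 1) ^ n + x ^ n ≤ x ^ n * (x + 2 ^ n) := by
  induction n with
  | zero => simp
  | succ n ih =>
    have hslack : 0 ≤ (2 ^ n - 1) * x ^ n * (x - 1) := by
      have : (1 : R) ≤ 2 ^ n := one_le_pow₀ one_le_two
      have : (0 : R) ≤ x ^ n := pow_nonneg (by linarith) n
      apply mul_nonneg (mul_nonneg _ _) <;> linarith
    linarith [mul_add_one_pow_succ_add_le_of_le hx ih]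

theorem mul_add_one_pow_add_pow_lt (hx : 1 < x) {n : ℕ} (hn : 2 ≤ n) :
    x * (x + 1) ^ n + x ^ n < x ^ n * (x + 2 ^ n) := by
  obtain ⟨k, rfl⟩ : ∃ k, n = k + 1 := ⟨n - 1, by omega⟩
  have hslack : 0 < (2 ^ k - 1) * x ^ k * (x - 1) := by
    have : (2 : R) ≤ 2 ^ k := le_self_pow₀ one_le_two (by omega)
    have : (0 : R) < x ^ k := pow_pos (by linarith) k
    apply mul_pos (mul_pos _ this) <;> linarith
  linarith [mul_add_one_pow_succ_add_le_of_le hx.le (mul_add_one_pow_add_pow_le hx.le k)]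

end

/-- For `r ≥ 2` and `m ≥ 2`, the rate `r^m/(r+1)^m` of the product code
strictly exceeds the bound `r/(r+t)` with `t = 2^m - 1`; equivalently
`r^m (r + 2^m - 1) > r (r+1)^m`. -/
theorem product_code_rate_exceeds_bound (r m : ℕ) (hr : 2 ≤ r) (hm : 2 ≤ m) :
    ((r : ℚ) ^ m / ((r : ℚ) + 1) ^ m > (r : ℚ) / ((r : ℚ) + 2 ^ m - 1)) ∧
    r ^ m * (r + 2 ^ m - 1) > r * (r + 1) ^ m := by
  have hr' : (1 : ℚ) < r := by exact_mod_cast hr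
  have key : (r : ℚ) * (r + 1) ^ m < r ^ m * (r + 2 ^ m - 1) := by
    linarith [mul_add_one_pow_add_pow_lt hr' hm]
  constructor
  · have hden : (0 : ℚ) < r + 2 ^ m - 1 := by
      linarith [one_le_pow₀ (M₀ := ℚ) one_le_two (n := m)]
    rw [gt_iff_lt, div_lt_div_iff₀ hden (by positivity)]
    exact key
  · have h2m : 1 ≤ 2 ^ m := Nat.one_le_two_pow
    have hcast : ((r * (r + 1) ^ m : ℕ) : ℚ) < ((r ^ m * (r + 2 ^ m - 1) : ℕ) : ℚ) := by
      push_cast [Nat.cast_sub (by omega : 1 ≤ r + 2 ^ m)]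
      exact key
    exact_mod_cast hcast
end

section
/- Let r ≥ 2 and m ≥ 1 be integers and let C be the binary code of length (r+1)^m defined by the parity-check matrix H. If two codewords x, y ∈ C agree on all coordinates outside a set E ⊆ Z_{r+1}^m with |E| ≤ 2^m - 1, then x = y; equivalently, every nonzero codeword of C has Hamming weight at least 2^m, so any 2^m - 1 erasures can be corrected. -/
/-!
Write a word of length `(r+1)^(m+1)` as its `r+1` slices `x(c, ·)`, `c ∈ Z_{r+1}`, each a word
of length `(r+1)^m`. The parity checks at `(c, α)` with `c < r` say exactly that the slice
`x(c, ·)` is a codeword of the `m`-dimensional code, and those at `(r, α)` say that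
`x(r, ·) = ∑_{c<r} x(c, ·)`. So all slices are codewords and, over `F_2`, they sum to zero;
a nonzero codeword therefore has at least two nonzero slices, and induction on `m` gives weight
at least `2^m`. Two codewords agreeing outside `E` differ by a codeword of weight at most `|E|`.
-/

open Finset Fintype

theorem exists_ne_ne_zero_of_sum_eq_zero {ι M : Type*} [Fintype ι] [AddCommMonoid M]
    {f : ι → M} (hsum : ∑ i, f i = 0) (hf : f ≠ 0) :
    ∃ i j, i ≠ j ∧ f i ≠ 0 ∧ f j ≠ 0 := by
  obtain ⟨i, hi⟩ := Function.ne_iff.mp hf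
  by_contra! hne
  rw [Finset.sum_eq_single i (fun j _ hji => hne i j hji.symm hi) (by simp)] at hsum
  exact hi hsum

theorem Fin.sum_piFinset_succ {M : Type*} [AddCommMonoid M] {n : ℕ} {α : Fin (n + 1) → Type*}
    [∀ i, DecidableEq (α i)] (s : ∀ i, Finset (α i)) (f : (∀ i, α i) → M) :
    ∑ x ∈ piFinset s, f x = ∑ a ∈ s 0, ∑ y ∈ piFinset (Fin.tail s), f (Fin.cons a y) := by
  have := filter_piFinset_eq_map_consEquiv s fun _ => True
  rw [filter_true, filter_true] at this
  rw [this, sum_map, sum_product]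
  rfl

theorem hammingNorm_eq_sum_cons {M α : Type*} [Fintype α] [DecidableEq M] [Zero M] {n : ℕ}
    (x : (Fin (n + 1) → α) → M) :
    hammingNorm x = ∑ a : α, hammingNorm fun y => x (Fin.cons a y) := by
  simp only [hammingNorm, card_filter]
  rw [← (Fin.consEquiv fun _ => α).sum_comp, Fintype.sum_prod_type]
  rfl

theorem eq_of_forall_notMem_eq_of_card_lt {ι G : Type*} [Fintype ι] [AddGroup G] [DecidableEq G]
    {C : AddSubgroup (ι → G)} {d : ℕ} (hd : ∀ x ∈ C, x ≠ 0 → d ≤ hammingNorm x)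
    {x y : ι → G} (hx : x ∈ C) (hy : y ∈ C) {E : Finset ι} (hE : #E < d)
    (hxy : ∀ i ∉ E, x i = y i) : x = y := by
  by_contra hne
  have hle : hammingNorm (x - y) ≤ #E := card_le_card fun i hi =>
    by_contra fun hiE => (mem_filter.mp hi).2 (sub_eq_zero.mpr (hxy i hiE))
  have := hd (x - y) (C.sub_mem hx hy) (sub_ne_zero.mpr hne)
  omega

variable {r m : ℕ}

def Lcoord (r : ℕ) (a : Fin (r + 1)) : Finset (Fin (r + 1)) :=
  {v | (v : ℕ) < r ∧ ((a : ℕ) < r → v = a)}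

theorem Lset_eq_piFinset (α : Fin m → Fin (r + 1)) :
    Lset r m α = piFinset fun j => Lcoord r (α j) := by
  ext μ
  simp only [Lset, Lcoord, mem_filter, mem_univ, true_and, mem_piFinset]
  exact ⟨fun ⟨h, h'⟩ j => ⟨h j, h' j⟩, fun h => ⟨fun j => (h j).1, fun j => (h j).2⟩⟩

theorem Lcoord_of_lt {a : Fin (r + 1)} (ha : (a : ℕ) < r) : Lcoord r a = {a} := by
  ext v
  simp only [Lcoord, mem_filter, mem_univ, true_and, mem_singleton]
  exact ⟨fun h => h.2 ha, fun h => ⟨h ▸ ha, fun _ => h⟩⟩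

theorem Lcoord_last : Lcoord r (Fin.last r) = univ.map Fin.castSuccEmb := by
  ext v
  simp [Lcoord, Fin.exists_castSucc_eq, ← Fin.lt_last_iff_ne_last, Fin.lt_def]

theorem Lset_of_forall_lt {α : Fin m → Fin (r + 1)} (hα : ∀ j, (α j : ℕ) < r) :
    Lset r m α = {α} := by
  simp only [Lset_eq_piFinset, Lcoord_of_lt (hα _), piFinset_singleton]

theorem mem_codeC_iff {x : (Fin m → Fin (r + 1)) → ZMod 2} :
    x ∈ codeC r m ↔ ∀ α, x α = ∑ β ∈ Lset r m α, x β := by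
  refine ⟨fun hx α => ?_, fun h α _ => h α⟩
  by_cases hα : ∀ j, (α j : ℕ) < r
  · rw [Lset_of_forall_lt hα, sum_singleton]
  · exact hx α hα

def codeCSubmodule (r m : ℕ) : Submodule (ZMod 2) ((Fin m → Fin (r + 1)) → ZMod 2) where
  carrier := codeC r m
  add_mem' {x y} hx hy := mem_codeC_iff.mpr fun α => by
    simp only [Pi.add_apply, sum_add_distrib, ← mem_codeC_iff.mp hx α, ← mem_codeC_iff.mp hy α]
  zero_mem' := mem_codeC_iff.mpr fun α => by simp
  smul_mem' c x hx := mem_codeC_iff.mpr fun α => by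
    simp only [Pi.smul_apply, smul_eq_mul, ← mul_sum, ← mem_codeC_iff.mp hx α]

def codeSlice (x : (Fin (m + 1) → Fin (r + 1)) → ZMod 2) (c : Fin (r + 1)) :
    (Fin m → Fin (r + 1)) → ZMod 2 :=
  fun β => x (Fin.cons c β)

theorem sum_Lset_cons (c : Fin (r + 1)) (α : Fin m → Fin (r + 1))
    (f : (Fin (m + 1) → Fin (r + 1)) → ZMod 2) :
    ∑ β ∈ Lset r (m + 1) (Fin.cons c α), f β =
      ∑ v ∈ Lcoord r c, ∑ β ∈ Lset r m α, f (Fin.cons v β) := by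
  rw [Lset_eq_piFinset, Fin.sum_piFinset_succ, Lset_eq_piFinset]
  rfl

section codeSlice

variable {x : (Fin (m + 1) → Fin (r + 1)) → ZMod 2}

theorem codeSlice_castSucc_mem_codeC (hx : x ∈ codeC r (m + 1)) (i : Fin r) :
    codeSlice x i.castSucc ∈ codeC r m :=
  mem_codeC_iff.mpr fun α => by
    rw [codeSlice, mem_codeC_iff.mp hx, sum_Lset_cons, Lcoord_of_lt i.castSucc_lt_last,
      sum_singleton]
    rfl

theorem codeSlice_last_eq_sum (hx : x ∈ codeC r (m + 1)) :
    codeSlice x (Fin.last r) = ∑ i : Fin r, codeSlice x i.castSucc := by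
  funext α
  rw [codeSlice, mem_codeC_iff.mp hx, sum_Lset_cons, Lcoord_last, sum_map, Finset.sum_apply]
  exact sum_congr rfl fun i _ => (mem_codeC_iff.mp (codeSlice_castSucc_mem_codeC hx i) α).symm

theorem codeSlice_mem_codeC (hx : x ∈ codeC r (m + 1)) (c : Fin (r + 1)) :
    codeSlice x c ∈ codeC r m := by
  induction c using Fin.lastCases with
  | last =>
    rw [codeSlice_last_eq_sum hx]
    exact Submodule.sum_mem (codeCSubmodule r m) fun i _ => codeSlice_castSucc_mem_codeC hx i
  | cast i => exact codeSlice_castSucc_mem_codeC hx i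

theorem sum_codeSlice_eq_zero (hx : x ∈ codeC r (m + 1)) : ∑ c, codeSlice x c = 0 := by
  rw [Fin.sum_univ_castSucc, ← codeSlice_last_eq_sum hx, CharTwo.add_self_eq_zero]

theorem codeSlice_ne_zero (hx : x ≠ 0) : codeSlice x ≠ 0 := fun h =>
  hx <| funext fun β => by simpa [codeSlice] using congr_fun (congr_fun h (β 0)) (Fin.tail β)

end codeSlice

theorem le_hammingNorm_of_mem_codeC {x : (Fin m → Fin (r + 1)) → ZMod 2} (hx : x ∈ codeC r m)
    (hx0 : x ≠ 0) : 2 ^ m ≤ hammingNorm x := by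
  induction m with
  | zero => exact hammingNorm_pos_iff.mpr hx0
  | succ m ih =>
    obtain ⟨c₁, c₂, hc, h₁, h₂⟩ :=
      exists_ne_ne_zero_of_sum_eq_zero (sum_codeSlice_eq_zero hx) (codeSlice_ne_zero hx0)
    calc 2 ^ (m + 1) = 2 ^ m + 2 ^ m := by ring
      _ ≤ hammingNorm (codeSlice x c₁) + hammingNorm (codeSlice x c₂) :=
        add_le_add (ih (codeSlice_mem_codeC hx c₁) h₁) (ih (codeSlice_mem_codeC hx c₂) h₂)
      _ ≤ ∑ c, hammingNorm (codeSlice x c) :=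
        add_le_sum (f := fun c => hammingNorm (codeSlice x c)) (fun _ _ => Nat.zero_le _)
          (mem_univ _) (mem_univ _) hc
      _ = hammingNorm x := (hammingNorm_eq_sum_cons x).symm

theorem codeC_erasure_correction_general (r m : ℕ) :
    (∀ x ∈ codeC r m, ∀ y ∈ codeC r m, ∀ E : Finset (Fin m → Fin (r + 1)),
      E.card ≤ 2 ^ m - 1 → (∀ β ∉ E, x β = y β) → x = y) ∧
    (∀ x ∈ codeC r m, x ≠ 0 →
      2 ^ m ≤ (Finset.univ.filter fun β => x β ≠ 0).card) := by
  refine ⟨fun x hx y hy E hE hxy => ?_, fun x hx hx0 => le_hammingNorm_of_mem_codeC hx hx0⟩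
  have hE' : #E < 2 ^ m := by have := Nat.one_le_two_pow (n := m); omega
  exact eq_of_forall_notMem_eq_of_card_lt (C := (codeCSubmodule r m).toAddSubgroup)
    (fun z hz hz0 => le_hammingNorm_of_mem_codeC hz hz0) hx hy hE' hxy

/-- If two codewords of `C` agree outside a set `E` with `|E| ≤ 2^m - 1`,
they are equal; equivalently, every nonzero codeword has Hamming weight at
least `2^m`, so any `2^m - 1` erasures can be corrected. -/
theorem codeC_erasure_correction (r m : ℕ) (hr : 2 ≤ r) (hm : 1 ≤ m) :
    (∀ x ∈ codeC r m, ∀ y ∈ codeC r m, ∀ E : Finset (Fin m → Fin (r + 1)),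
      E.card ≤ 2 ^ m - 1 → (∀ β ∉ E, x β = y β) → x = y) ∧
    (∀ x ∈ codeC r m, x ≠ 0 →
      2 ^ m ≤ (Finset.univ.filter fun β => x β ≠ 0).card) :=
  codeC_erasure_correction_general r m
end
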